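/- Let α⁺, λ⁺, α⁻, λ⁻ > 0 with λ⁺ ≤ 1, r ≥ q ≥ 0, and define G : (−∞,0) → ℝ by G(ϑ) = α⁺∫₀^∞ (1/x)e^{−λ⁺x}(e^x−1)e^{ϑ(e^x−1)}dx + α⁻∫₀^∞ (1/x)e^{−λ⁻x}(e^{−x}−1)e^{ϑ(e^{−x}−1)}dx. Then there exists a unique ϑ < 0 such that G(ϑ) = r − q. -/

import Mathlib

/-!
On `(-∞, 0)` the positive-jump integrand is strictly increasing in `ϑ` and the negative-jump
integrand is increasing, so `G` is strictly increasing; a monotone family of integrands is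
dominated by its two endpoint integrands, which gives continuity by dominated convergence.
As `ϑ → -∞` the positive part stays bounded while the negative part is at most
`-(e^{-2λ⁻}/4) e^{-ϑ/2}`, from the integrand on `[1, 2]`. As `ϑ ↑ 0`, for `λ⁺ ≤ 1` the
positive-jump integrand is at least `1/(4x)` on `[1, R]` once `ϑ (e^R - 1) ≥ -log 2`, so its
integral is at least `log R / 4` with `R → ∞`. Hence `G` is a continuous increasing bijection
of `(-∞, 0)` onto `ℝ`.
-/

open Real Set Filter MeasureTheory Topology

theorem exp_sub_one_le_mul_exp (x : ℝ) : exp x - 1 ≤ x * exp x := by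
  nlinarith [add_one_le_exp (-x), exp_neg x, exp_pos x, mul_inv_cancel₀ (exp_pos x).ne']

theorem one_sub_exp_neg_le (x : ℝ) : 1 - exp (-x) ≤ x := by
  linarith [add_one_le_exp (-x)]

theorem integrable_exp_quadratic {b : ℝ} (hb : 0 < b) (c : ℝ) :
    Integrable fun x : ℝ => exp (-b * x ^ 2 + c * x) := by
  simpa [Complex.norm_exp, ← Complex.ofReal_pow] using
    (integrable_cexp_quadratic (b := b) (by simpa) c 0).norm

section Integral

variable {α : Type*} [MeasurableSpace α] {μ : Measure α}

theorem integral_lt_integral_of_ae_lt (hμ : μ ≠ 0) {f g : α → ℝ} (hf : Integrable f μ)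
    (hg : Integrable g μ) (hfg : ∀ᵐ x ∂μ, f x < g x) :
    ∫ x, f x ∂μ < ∫ x, g x ∂μ := by
  have hle : f ≤ᵐ[μ] g := hfg.mono fun _ => le_of_lt
  refine (integral_mono_ae hf hg hle).lt_of_ne fun h => hμ ?_
  have hfalse : ∀ᵐ _ ∂μ, False :=
    (hfg.and ((integral_eq_iff_of_ae_le hf hg hle).1 h)).mono fun _ h => h.1.ne h.2
  exact ae_eq_bot.1 (eventually_false_iff_eq_bot.1 hfalse)

theorem continuousOn_integral_of_monotoneOn {F : ℝ → α → ℝ} {a b : ℝ}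
    (hmeas : ∀ ϑ ∈ Ioo a b, AEStronglyMeasurable (F ϑ) μ)
    (hmono : ∀ᵐ x ∂μ, MonotoneOn (F · x) (Icc a b))
    (hcont : ∀ᵐ x ∂μ, ContinuousOn (F · x) (Ioo a b))
    (ha : Integrable (F a) μ) (hb : Integrable (F b) μ) :
    ContinuousOn (fun ϑ => ∫ x, F ϑ x ∂μ) (Ioo a b) := by
  intro ϑ₀ hϑ₀
  refine ContinuousAt.continuousWithinAt <|
    continuousAt_of_dominated (bound := fun x => max |F a x| |F b x|)
      (eventually_of_mem (Ioo_mem_nhds hϑ₀.1 hϑ₀.2) hmeas) ?_ (ha.abs.sup hb.abs) ?_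
  · filter_upwards [Ioo_mem_nhds hϑ₀.1 hϑ₀.2] with ϑ hϑ
    filter_upwards [hmono] with x hx
    have hab : a ≤ b := (hϑ.1.trans hϑ.2).le
    exact abs_le_max_abs_abs (hx ⟨le_rfl, hab⟩ (Ioo_subset_Icc_self hϑ) hϑ.1.le)
      (hx (Ioo_subset_Icc_self hϑ) ⟨hab, le_rfl⟩ hϑ.2.le)
  · filter_upwards [hcont] with x hx
    exact hx.continuousAt (Ioo_mem_nhds hϑ₀.1 hϑ₀.2)

end Integral

theorem existsUnique_eq_of_strictMonoOn_Iio {α β : Type*}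
    [ConditionallyCompleteLinearOrder α] [TopologicalSpace α] [OrderTopology α]
    [DenselyOrdered α] [NoMinOrder α]
    [LinearOrder β] [TopologicalSpace β] [OrderClosedTopology β]
    {f : α → β} {a : α} (hcont : ContinuousOn f (Iio a)) (hmono : StrictMonoOn f (Iio a))
    (hbot : Tendsto f atBot atBot) (htop : Tendsto f (𝓝[<] a) atTop) (y : β) :
    ∃! x, x < a ∧ f x = y := by
  obtain ⟨x₂, hyx₂, hx₂a⟩ := ((htop.eventually_ge_atTop y).and self_mem_nhdsWithin).exists
  obtain ⟨x₁, hx₁y, hx₁₂⟩ :=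
    ((hbot.eventually_le_atBot y).and (eventually_le_atBot x₂)).exists
  obtain ⟨x, hx, rfl⟩ := intermediate_value_Icc hx₁₂
    (hcont.mono fun t ht => ht.2.trans_lt hx₂a) ⟨hx₁y, hyx₂⟩
  have hxa : x < a := hx.2.trans_lt hx₂a
  exact ⟨x, ⟨hxa, rfl⟩, fun z hz => hmono.injOn hz.1 hxa hz.2⟩

noncomputable section

def posJumpIntegrand (l ϑ x : ℝ) : ℝ :=
  1 / x * exp (-l * x) * (exp x - 1) * exp (ϑ * (exp x - 1))

def negJumpIntegrand (l ϑ x : ℝ) : ℝ :=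
  1 / x * exp (-l * x) * (exp (-x) - 1) * exp (ϑ * (exp (-x) - 1))

def posJumpIntegral (l ϑ : ℝ) : ℝ := ∫ x in Ioi 0, posJumpIntegrand l ϑ x

def negJumpIntegral (l ϑ : ℝ) : ℝ := ∫ x in Ioi 0, negJumpIntegrand l ϑ x

def esscherMean (ap lp am lm ϑ : ℝ) : ℝ :=
  ap * posJumpIntegral lp ϑ + am * negJumpIntegral lm ϑ

end

section JumpIntegrals

variable {l ϑ x : ℝ}

theorem measurable_posJumpIntegrand : Measurable (posJumpIntegrand l ϑ) := by
  unfold posJumpIntegrand; fun_prop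

theorem measurable_negJumpIntegrand : Measurable (negJumpIntegrand l ϑ) := by
  unfold negJumpIntegrand; fun_prop

theorem posJumpIntegrand_strictMono (hx : 0 < x) : StrictMono (posJumpIntegrand l · x) := by
  intro ϑ₁ ϑ₂ h
  have hex : 0 < exp x - 1 := by linarith [add_one_lt_exp hx.ne']
  simp only [posJumpIntegrand]
  gcongr

theorem posJumpIntegrand_pos (hx : 0 < x) : 0 < posJumpIntegrand l ϑ x := by
  have hex : 0 < exp x - 1 := by linarith [add_one_lt_exp hx.ne']
  unfold posJumpIntegrand
  positivity

theorem negJumpIntegrand_monotone (hx : 0 < x) : Monotone (negJumpIntegrand l · x) := by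
  intro ϑ₁ ϑ₂ h
  have hex : 0 < 1 - exp (-x) := by linarith [exp_lt_one_iff.2 (neg_lt_zero.2 hx)]
  simp only [negJumpIntegrand, ← neg_sub 1 (exp (-x)), mul_neg, neg_mul, neg_le_neg_iff]
  gcongr

theorem negJumpIntegrand_nonpos (hx : 0 < x) : negJumpIntegrand l ϑ x ≤ 0 := by
  have hex : exp (-x) - 1 ≤ 0 := by linarith [exp_lt_one_iff.2 (neg_lt_zero.2 hx)]
  unfold negJumpIntegrand
  exact mul_nonpos_of_nonpos_of_nonneg
    (mul_nonpos_of_nonneg_of_nonpos (by positivity) hex) (exp_pos _).le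

theorem posJumpIntegrand_le_exp_quadratic (hϑ : ϑ ≤ 0) (hx : 0 < x) :
    posJumpIntegrand l ϑ x ≤ exp (-(-ϑ / 2) * x ^ 2 + (1 - l) * x) := by
  have hdiv : 1 / x * (exp x - 1) ≤ exp x := by
    rw [one_div_mul_eq_div, div_le_iff₀ hx, mul_comm]
    exact exp_sub_one_le_mul_exp x
  have hquad : ϑ * (exp x - 1) ≤ ϑ * (x ^ 2 / 2) :=
    mul_le_mul_of_nonpos_left (by linarith [quadratic_le_exp_of_nonneg hx.le]) hϑ
  calc posJumpIntegrand l ϑ x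
      = 1 / x * (exp x - 1) * exp (-l * x) * exp (ϑ * (exp x - 1)) := by
        unfold posJumpIntegrand; ring
    _ ≤ exp x * exp (-l * x) * exp (ϑ * (x ^ 2 / 2)) := by
        have : 0 ≤ 1 / x * (exp x - 1) := by
          have : 0 < exp x - 1 := by linarith [add_one_lt_exp hx.ne']
          positivity
        gcongr
    _ = exp (-(-ϑ / 2) * x ^ 2 + (1 - l) * x) := by
        rw [← exp_add, ← exp_add]; ring_nf

theorem integrableOn_posJumpIntegrand (hϑ : ϑ < 0) :
    IntegrableOn (posJumpIntegrand l ϑ) (Ioi 0) := by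
  refine Integrable.mono'
    (integrable_exp_quadratic (b := -ϑ / 2) (by linarith) (1 - l)).integrableOn
    measurable_posJumpIntegrand.aestronglyMeasurable ?_
  filter_upwards [ae_restrict_mem measurableSet_Ioi] with x hx
  rw [norm_of_nonneg (posJumpIntegrand_pos hx).le]
  exact posJumpIntegrand_le_exp_quadratic hϑ.le hx

theorem norm_negJumpIntegrand_le (hx : 0 < x) :
    ‖negJumpIntegrand l ϑ x‖ ≤ exp |ϑ| * exp (-l * x) := by
  have h₀ : 0 ≤ 1 - exp (-x) := by linarith [exp_le_one_iff.2 (neg_nonpos.2 hx.le)]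
  have h₁ : 1 - exp (-x) ≤ 1 := by linarith [exp_pos (-x)]
  have hdiv : 1 / x * (1 - exp (-x)) ≤ 1 := by
    rw [one_div_mul_eq_div, div_le_one hx]; exact one_sub_exp_neg_le x
  have hexp : ϑ * (exp (-x) - 1) ≤ |ϑ| :=
    calc ϑ * (exp (-x) - 1) ≤ |ϑ| * |exp (-x) - 1| := (le_abs_self _).trans (abs_mul _ _).le
      _ ≤ |ϑ| * 1 := by gcongr; rw [abs_sub_comm, abs_of_nonneg h₀]; exact h₁
      _ = |ϑ| := mul_one _
  calc ‖negJumpIntegrand l ϑ x‖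
      = 1 / x * (1 - exp (-x)) * exp (-l * x) * exp (ϑ * (exp (-x) - 1)) := by
        rw [norm_eq_abs, abs_of_nonpos (negJumpIntegrand_nonpos hx)]
        unfold negJumpIntegrand; ring
    _ ≤ 1 * exp (-l * x) * exp |ϑ| := by gcongr
    _ = exp |ϑ| * exp (-l * x) := by ring

theorem integrableOn_negJumpIntegrand (hl : 0 < l) (ϑ : ℝ) :
    IntegrableOn (negJumpIntegrand l ϑ) (Ioi 0) := by
  refine Integrable.mono' ((exp_neg_integrableOn_Ioi 0 hl).const_mul (exp |ϑ|))
    measurable_negJumpIntegrand.aestronglyMeasurable ?_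
  filter_upwards [ae_restrict_mem measurableSet_Ioi] with x hx
  exact norm_negJumpIntegrand_le hx

theorem posJumpIntegral_strictMonoOn : StrictMonoOn (posJumpIntegral l) (Iio 0) := by
  intro ϑ₁ h₁ ϑ₂ h₂ h
  refine integral_lt_integral_of_ae_lt (by simp [Measure.restrict_eq_zero])
    (integrableOn_posJumpIntegrand h₁) (integrableOn_posJumpIntegrand h₂) ?_
  filter_upwards [ae_restrict_mem measurableSet_Ioi] with x hx
  exact posJumpIntegrand_strictMono hx h

theorem negJumpIntegral_monotone (hl : 0 < l) : Monotone (negJumpIntegral l) :=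
  fun _ _ h => setIntegral_mono_on (integrableOn_negJumpIntegrand hl _)
    (integrableOn_negJumpIntegrand hl _) measurableSet_Ioi
    fun _ hx => negJumpIntegrand_monotone hx h

theorem posJumpIntegral_continuousOn : ContinuousOn (posJumpIntegral l) (Iio 0) := by
  intro ϑ₀ (h₀ : ϑ₀ < 0)
  have hcont := continuousOn_integral_of_monotoneOn (μ := volume.restrict (Ioi 0))
    (F := posJumpIntegrand l) (a := ϑ₀ - 1) (b := ϑ₀ / 2)
    (fun _ _ => measurable_posJumpIntegrand.aestronglyMeasurable)
    ((ae_restrict_mem measurableSet_Ioi).mono fun _ hx =>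
      (posJumpIntegrand_strictMono hx).monotone.monotoneOn _)
    (Eventually.of_forall fun x =>
      (by unfold posJumpIntegrand; fun_prop : Continuous (posJumpIntegrand l · x)).continuousOn)
    (integrableOn_posJumpIntegrand (by linarith)) (integrableOn_posJumpIntegrand (by linarith))
  exact (hcont.continuousAt (Ioo_mem_nhds (by linarith) (by linarith))).continuousWithinAt

theorem negJumpIntegral_continuous (hl : 0 < l) : Continuous (negJumpIntegral l) := by
  refine continuous_iff_continuousAt.2 fun ϑ₀ => ?_
  have hcont := continuousOn_integral_of_monotoneOn (μ := volume.restrict (Ioi 0))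
    (F := negJumpIntegrand l) (a := ϑ₀ - 1) (b := ϑ₀ + 1)
    (fun _ _ => measurable_negJumpIntegrand.aestronglyMeasurable)
    ((ae_restrict_mem measurableSet_Ioi).mono fun _ hx =>
      (negJumpIntegrand_monotone hx).monotoneOn _)
    (Eventually.of_forall fun x =>
      (by unfold negJumpIntegrand; fun_prop : Continuous (negJumpIntegrand l · x)).continuousOn)
    (integrableOn_negJumpIntegrand hl _) (integrableOn_negJumpIntegrand hl _)
  exact hcont.continuousAt (Ioo_mem_nhds (by linarith) (by linarith))

theorem negJumpIntegrand_le_of_mem_Icc (hl : 0 ≤ l) (hϑ : ϑ ≤ 0) (hx : x ∈ Icc 1 2) :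
    negJumpIntegrand l ϑ x ≤ -(exp (-2 * l) / 4) * exp (-ϑ / 2) := by
  obtain ⟨hx₁, hx₂⟩ := hx
  have hhalf : 1 / 2 ≤ 1 - exp (-x) := by
    linarith [exp_le_exp.2 (neg_le_neg hx₁), exp_neg_one_lt_half]
  have hinv : 1 / 2 ≤ 1 / x := one_div_le_one_div_of_le (by linarith) hx₂
  have hdecay : exp (-2 * l) ≤ exp (-l * x) := exp_le_exp.2 (by nlinarith)
  have hweight : exp (-ϑ / 2) ≤ exp (ϑ * (exp (-x) - 1)) := exp_le_exp.2 (by nlinarith)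
  have hlower : exp (-2 * l) / 4 * exp (-ϑ / 2)
      ≤ 1 / x * exp (-l * x) * (1 - exp (-x)) * exp (ϑ * (exp (-x) - 1)) :=
    calc exp (-2 * l) / 4 * exp (-ϑ / 2) = 1 / 2 * exp (-2 * l) * (1 / 2) * exp (-ϑ / 2) := by
          ring
      _ ≤ _ := by gcongr
  have heq : negJumpIntegrand l ϑ x =
      -(1 / x * exp (-l * x) * (1 - exp (-x)) * exp (ϑ * (exp (-x) - 1))) := by
    unfold negJumpIntegrand; ring
  linarith

theorem negJumpIntegral_le (hl : 0 < l) (hϑ : ϑ ≤ 0) :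
    negJumpIntegral l ϑ ≤ -(exp (-2 * l) / 4) * exp (-ϑ / 2) := by
  have hsub : Icc (1 : ℝ) 2 ⊆ Ioi 0 := fun x hx => zero_lt_one.trans_le hx.1
  have hint := integrableOn_negJumpIntegrand hl ϑ
  have hrestrict : -∫ x in Icc 1 2, negJumpIntegrand l ϑ x ≤ -negJumpIntegral l ϑ := by
    simp only [negJumpIntegral, ← integral_neg]
    refine setIntegral_mono_set hint.neg ?_ hsub.eventuallyLE
    filter_upwards [ae_restrict_mem measurableSet_Ioi] with x hx
    exact neg_nonneg.2 (negJumpIntegrand_nonpos hx)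
  have hbound : ∫ x in Icc 1 2, negJumpIntegrand l ϑ x ≤ -(exp (-2 * l) / 4) * exp (-ϑ / 2) :=
    calc ∫ x in Icc 1 2, negJumpIntegrand l ϑ x
        ≤ ∫ _ in Icc (1 : ℝ) 2, -(exp (-2 * l) / 4) * exp (-ϑ / 2) :=
          setIntegral_mono_on (hint.mono_set hsub) (integrableOn_const (by simp))
            measurableSet_Icc fun _ hx => negJumpIntegrand_le_of_mem_Icc hl.le hϑ hx
      _ = -(exp (-2 * l) / 4) * exp (-ϑ / 2) := by norm_num
  linarith

theorem tendsto_negJumpIntegral_atBot (hl : 0 < l) :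
    Tendsto (negJumpIntegral l) atBot atBot := by
  have hexp : Tendsto (fun ϑ : ℝ => exp (-ϑ / 2)) atBot atTop :=
    tendsto_exp_atTop.comp (tendsto_neg_atBot_atTop.atTop_div_const two_pos)
  refine tendsto_atBot_mono' _ ?_ (hexp.const_mul_atTop_of_neg (r := -(exp (-2 * l) / 4))
    (by simp only [Left.neg_neg_iff]; positivity))
  filter_upwards [eventually_le_atBot 0] with ϑ hϑ
  exact negJumpIntegral_le hl hϑ

theorem inv_div_four_le_posJumpIntegrand (hl : l ≤ 1) (hx : 1 ≤ x)
    (hϑx : -log 2 ≤ ϑ * (exp x - 1)) :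
    x⁻¹ / 4 ≤ posJumpIntegrand l ϑ x := by
  have hgrowth : 1 ≤ exp ((1 - l) * x) := one_le_exp (by nlinarith)
  have hhalf : 1 / 2 ≤ 1 - exp (-x) := by
    linarith [exp_le_exp.2 (neg_le_neg hx), exp_neg_one_lt_half]
  have hfactor : exp (-l * x) * (exp x - 1) = exp ((1 - l) * x) * (1 - exp (-x)) := by
    simp only [mul_sub, mul_one, ← exp_add]; ring_nf
  have hweight : 1 / 2 ≤ exp (ϑ * (exp x - 1)) := by
    calc (1 : ℝ) / 2 = exp (-log 2) := by rw [exp_neg, exp_log two_pos, one_div]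
      _ ≤ _ := exp_le_exp.2 hϑx
  calc x⁻¹ / 4 = x⁻¹ * (1 * (1 / 2)) * (1 / 2) := by ring
    _ ≤ x⁻¹ * (exp ((1 - l) * x) * (1 - exp (-x))) * exp (ϑ * (exp x - 1)) := by
        have : 0 < x⁻¹ := inv_pos.2 (by linarith)
        gcongr
    _ = posJumpIntegrand l ϑ x := by
        unfold posJumpIntegrand
        rw [← hfactor]; ring

theorem log_div_four_le_posJumpIntegral (hl : l ≤ 1) {R : ℝ} (hR : 1 ≤ R) :
    log R / 4 ≤ posJumpIntegral l (-log 2 / (exp R - 1)) := by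
  have hR' : 0 < exp R - 1 := sub_pos.2 (one_lt_exp_iff.2 (by linarith))
  set ϑ := -log 2 / (exp R - 1) with hϑ
  have hϑneg : ϑ < 0 := div_neg_of_neg_of_pos (neg_neg_of_pos (log_pos one_lt_two)) hR'
  have hsub : Ioc 1 R ⊆ Ioi (0 : ℝ) := fun x hx => zero_lt_one.trans hx.1
  have hint := integrableOn_posJumpIntegrand (l := l) hϑneg
  calc log R / 4 = ∫ x in Ioc 1 R, x⁻¹ / 4 := by
        rw [integral_div, ← intervalIntegral.integral_of_le hR,
          integral_inv_of_pos one_pos (by linarith), div_one]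
    _ ≤ ∫ x in Ioc 1 R, posJumpIntegrand l ϑ x := by
        refine setIntegral_mono_on ?_ (hint.mono_set hsub) measurableSet_Ioc fun x hx => ?_
        · have hinv : ContinuousOn (·⁻¹) (Icc 1 R) :=
            continuousOn_inv₀.mono fun x hx => (zero_lt_one.trans_le hx.1).ne'
          exact (hinv.integrableOn_Icc.mono_set Ioc_subset_Icc_self).div_const 4
        · refine inv_div_four_le_posJumpIntegrand hl hx.1.le ?_
          calc -log 2 = ϑ * (exp R - 1) := by rw [hϑ, div_mul_cancel₀ _ hR'.ne']
            _ ≤ ϑ * (exp x - 1) := mul_le_mul_of_nonpos_left (by gcongr; exact hx.2) hϑneg.le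
    _ ≤ posJumpIntegral l ϑ :=
        setIntegral_mono_set hint
          ((ae_restrict_mem measurableSet_Ioi).mono fun _ hx => (posJumpIntegrand_pos hx).le)
          hsub.eventuallyLE

theorem tendsto_posJumpIntegral_nhdsLT_zero (hl : l ≤ 1) :
    Tendsto (posJumpIntegral l) (𝓝[<] 0) atTop := by
  refine tendsto_atTop.2 fun M => ?_
  set R := max 1 (exp (4 * M))
  have hR : 1 ≤ R := le_max_left _ _
  have hM : M ≤ log R / 4 := by
    have := log_le_log (exp_pos _) (le_max_right 1 (exp (4 * M)))
    rw [log_exp] at this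
    linarith
  have hϑR : -log 2 / (exp R - 1) < 0 :=
    div_neg_of_neg_of_pos (neg_neg_of_pos (log_pos one_lt_two))
      (sub_pos.2 (one_lt_exp_iff.2 (by linarith)))
  filter_upwards [Ioo_mem_nhdsLT hϑR] with ϑ hϑ
  exact hM.trans ((log_div_four_le_posJumpIntegral hl hR).trans
    (posJumpIntegral_strictMonoOn.monotoneOn hϑR hϑ.2 hϑ.1.le))

end JumpIntegrals

section EsscherMean

variable {ap lp am lm : ℝ}

theorem esscherMean_strictMonoOn (hap : 0 < ap) (ham : 0 ≤ am) (hlm : 0 < lm) :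
    StrictMonoOn (esscherMean ap lp am lm) (Iio 0) := fun _ h₁ _ h₂ h =>
  add_lt_add_of_lt_of_le (mul_lt_mul_of_pos_left (posJumpIntegral_strictMonoOn h₁ h₂ h) hap)
    (mul_le_mul_of_nonneg_left (negJumpIntegral_monotone hlm h.le) ham)

theorem esscherMean_continuousOn (hlm : 0 < lm) :
    ContinuousOn (esscherMean ap lp am lm) (Iio 0) :=
  (continuousOn_const.mul posJumpIntegral_continuousOn).add
    (continuousOn_const.mul (negJumpIntegral_continuous hlm).continuousOn)

theorem tendsto_esscherMean_atBot (hap : 0 ≤ ap) (ham : 0 < am) (hlm : 0 < lm) :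
    Tendsto (esscherMean ap lp am lm) atBot atBot := by
  refine tendsto_atBot_add_left_of_ge' _ (ap * posJumpIntegral lp (-1)) ?_
    ((tendsto_negJumpIntegral_atBot hlm).const_mul_atBot ham)
  filter_upwards [eventually_le_atBot (-1)] with ϑ hϑ
  exact mul_le_mul_of_nonneg_left (posJumpIntegral_strictMonoOn.monotoneOn
    (show ϑ < 0 by linarith) (show (-1 : ℝ) < 0 by norm_num) hϑ) hap

theorem tendsto_esscherMean_nhdsLT_zero (hap : 0 < ap) (hlp : lp ≤ 1) (ham : 0 ≤ am)
    (hlm : 0 < lm) : Tendsto (esscherMean ap lp am lm) (𝓝[<] 0) atTop := by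
  refine tendsto_atTop_add_right_of_le' _ (am * negJumpIntegral lm (-1))
    ((tendsto_posJumpIntegral_nhdsLT_zero hlp).const_mul_atTop hap) ?_
  filter_upwards [Ioo_mem_nhdsLT (show (-1 : ℝ) < 0 by norm_num)] with ϑ hϑ
  exact mul_le_mul_of_nonneg_left (negJumpIntegral_monotone hlm hϑ.1.le) ham

end EsscherMean

theorem memm_exists_unique_parameter_general
    (ap lp am lm r q : ℝ)
    (hap : 0 < ap) (ham : 0 < am) (hlm : 0 < lm)
    (hlp1 : lp ≤ 1)
    (G : ℝ → ℝ)
    (hG : ∀ ϑ, G ϑ =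
      ap * (∫ x in Ioi (0 : ℝ),
        (1 / x) * Real.exp (-lp * x) * (Real.exp x - 1) * Real.exp (ϑ * (Real.exp x - 1)))
      + am * (∫ x in Ioi (0 : ℝ),
        (1 / x) * Real.exp (-lm * x) * (Real.exp (-x) - 1) *
          Real.exp (ϑ * (Real.exp (-x) - 1)))) :
    ∃! ϑ, ϑ < 0 ∧ G ϑ = r - q := by
  obtain rfl : G = esscherMean ap lp am lm := funext hG
  exact existsUnique_eq_of_strictMonoOn_Iio (esscherMean_continuousOn hlm)
    (esscherMean_strictMonoOn hap ham.le hlm) (tendsto_esscherMean_atBot hap.le ham hlm)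
    (tendsto_esscherMean_nhdsLT_zero hap hlp1 ham.le hlm) (r - q)

theorem memm_exists_unique_parameter
    (ap lp am lm r q : ℝ)
    (hap : 0 < ap) (hlp : 0 < lp) (ham : 0 < am) (hlm : 0 < lm)
    (hlp1 : lp ≤ 1) (hq : 0 ≤ q) (hrq : q ≤ r)
    (G : ℝ → ℝ)
    (hG : ∀ ϑ, G ϑ =
      ap * (∫ x in Ioi (0 : ℝ),
        (1 / x) * Real.exp (-lp * x) * (Real.exp x - 1) * Real.exp (ϑ * (Real.exp x - 1)))
      + am * (∫ x in Ioi (0 : ℝ),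
        (1 / x) * Real.exp (-lm * x) * (Real.exp (-x) - 1) *
          Real.exp (ϑ * (Real.exp (-x) - 1)))) :
    ∃! ϑ, ϑ < 0 ∧ G ϑ = r - q :=
  memm_exists_unique_parameter_general ap lp am lm r q hap ham hlm hlp1 G hG
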